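/- arXiv:1001.1866 — 7 statements merged into one kernel-verified Lean document; each statement's English description precedes it below -/
import Mathlib

section
/- Let E be a locally convex topological vector space over the reals with topological dual E*, and endow E* with any locally convex topology. If the evaluation mapping ev : E × E* → ℝ, ev(x, x*) = x*(x), is jointly continuous, then the topology on E is normable (i.e., E admits a bounded neighbourhood of zero). -/
/-!
Joint continuity of `(x, f) ↦ f x` at the origin gives neighbourhoods `U ∋ 0` in `E` and `V ∋ 0`
in the dual with `|f x| ≤ 1` on `U × V`, i.e. `V` lies in the polar of `U`. As `V` is absorbent,
every continuous functional is bounded on `U`, and by Mackey's theorem a weakly bounded subset of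
a locally convex space is bounded.

Mackey's theorem is reduced to normed spaces one continuous seminorm `p` at a time: in `E` normed
by `p`, the points of `U` act on the (complete) dual as a pointwise bounded family, so
Banach–Steinhaus bounds their norms, which are their double-dual norms by Hahn–Banach.
-/

open Set Bornology

section WeakBoundedness

variable {𝕜 F : Type*} [RCLike 𝕜] [SeminormedAddCommGroup F] [NormedSpace 𝕜 F]

theorem isBounded_of_forall_isBounded_image_dual {S : Set F}
    (hS : ∀ f : StrongDual 𝕜 F, IsBounded (f '' S)) : IsBounded S := by
  let ev : S → StrongDual 𝕜 (StrongDual 𝕜 F) := fun y ↦ NormedSpace.inclusionInDoubleDual 𝕜 F y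
  have hev : ∀ f, ∃ C, ∀ y, ‖ev y f‖ ≤ C := fun f ↦ by
    obtain ⟨C, hC⟩ := isBounded_iff_forall_norm_le.1 (hS f)
    exact ⟨C, fun y ↦ hC _ (mem_image_of_mem f y.2)⟩
  obtain ⟨C, hC⟩ := banach_steinhaus hev
  refine isBounded_iff_forall_norm_le.2 ⟨C, fun y hy ↦ ?_⟩
  rw [← (NormedSpace.inclusionInDoubleDualLi 𝕜).norm_map y]
  exact hC ⟨y, hy⟩

end WeakBoundedness

section WithSeminorm

variable {𝕜 E : Type*} [NormedField 𝕜] [AddCommGroup E] [Module 𝕜 E]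

/-- `E` normed by `p`; a type synonym, so that its topology does not clash with the one of `E`. -/
def WithSeminorm (_p : Seminorm 𝕜 E) : Type _ := E

variable (p : Seminorm 𝕜 E)

noncomputable instance : SeminormedAddCommGroup (WithSeminorm p) :=
  p.toAddGroupSeminorm.toSeminormedAddCommGroup

instance : Module 𝕜 (WithSeminorm p) := inferInstanceAs (Module 𝕜 E)

instance : NormedSpace 𝕜 (WithSeminorm p) where
  norm_smul_le c x := (map_smul_eq_mul p c x).le

variable {p} [TopologicalSpace E] [ContinuousSub E]

def WithSeminorm.ofContinuous (hp : Continuous p) : E →L[𝕜] WithSeminorm p where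
  toLinearMap := LinearMap.id
  cont := by
    refine continuous_iff_continuousAt.2 fun x ↦ tendsto_iff_norm_sub_tendsto_zero.2 ?_
    have hpx := (hp.comp (continuous_sub_right x)).tendsto x
    rw [Function.comp_apply, sub_self, map_zero] at hpx
    exact hpx

theorem WithSeminorm.norm_ofContinuous (hp : Continuous p) (x : E) :
    ‖WithSeminorm.ofContinuous hp x‖ = p x := rfl

end WithSeminorm

theorem isVonNBounded_of_forall_isBounded_image_dual {𝕜 E : Type*} [RCLike 𝕜] [AddCommGroup E]
    [Module 𝕜 E] [TopologicalSpace E] [IsTopologicalAddGroup E] [PolynormableSpace 𝕜 E]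
    {U : Set E} (hU : ∀ f : StrongDual 𝕜 E, IsBounded (f '' U)) : IsVonNBounded 𝕜 U := by
  rw [(PolynormableSpace.withSeminorms 𝕜 E).isVonNBounded_iff_seminorm_bddAbove]
  rintro ⟨p, hp⟩
  let T := WithSeminorm.ofContinuous hp
  have hTU : IsBounded (T '' U) := isBounded_of_forall_isBounded_image_dual (𝕜 := 𝕜) fun φ ↦ by
    rw [image_image]
    exact hU (φ.comp T)
  obtain ⟨C, hC⟩ := isBounded_iff_forall_norm_le.1 hTU
  refine ⟨C, forall_mem_image.2 fun x hx ↦ ?_⟩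
  rw [← WithSeminorm.norm_ofContinuous hp]
  exact hC (T x) (mem_image_of_mem T hx)

theorem isBounded_image_of_absorbent_subset_polar {𝕜 E : Type*} [NontriviallyNormedField 𝕜]
    [AddCommGroup E] [Module 𝕜 E] [TopologicalSpace E] {U : Set E} {V : Set (StrongDual 𝕜 E)}
    (hV : Absorbent 𝕜 V) (hVU : V ⊆ StrongDual.polar 𝕜 U) (f : StrongDual 𝕜 E) :
    IsBounded (f '' U) := by
  obtain ⟨r, -, hr⟩ := (hV f).exists_pos
  obtain ⟨c, hc⟩ := NormedField.exists_lt_norm 𝕜 r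
  obtain ⟨g, hg, rfl⟩ := hr c hc.le rfl
  refine isBounded_iff_forall_norm_le.2 ⟨‖c‖, forall_mem_image.2 fun x hx ↦ ?_⟩
  rw [smul_apply, norm_smul]
  exact mul_le_of_le_one_right (norm_nonneg c) (hVU hg x hx)

theorem evaluation_jointly_continuous_implies_normable_general
    {E : Type*} [AddCommGroup E] [Module ℝ E] [TopologicalSpace E]
    [IsTopologicalAddGroup E] [ContinuousSMul ℝ E] [LocallyConvexSpace ℝ E]
    (t : TopologicalSpace (E →L[ℝ] ℝ))
    (ht2 : @ContinuousSMul ℝ (E →L[ℝ] ℝ) _ _ t)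
    (hev : @Continuous (E × (E →L[ℝ] ℝ)) ℝ
      (@instTopologicalSpaceProd E (E →L[ℝ] ℝ) _ t) _
      (fun p => p.2 p.1)) :
    ∃ U ∈ nhds (0 : E), Bornology.IsVonNBounded ℝ U := by
  obtain ⟨U, hU, V, hV, hUV⟩ := mem_nhds_prod_iff.1 <|
    hev.continuousAt.preimage_mem_nhds (x := (0, 0)) (Metric.closedBall_mem_nhds _ one_pos)
  have hVU : V ⊆ StrongDual.polar ℝ U := fun f hf x hx ↦ by
    simpa using hUV (mk_mem_prod hx hf)
  exact ⟨U, hU, isVonNBounded_of_forall_isBounded_image_dual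
    (isBounded_image_of_absorbent_subset_polar (absorbent_nhds_zero hV) hVU)⟩

/-- If `E` is a locally convex topological vector space over `ℝ`, its topological dual
`E →L[ℝ] ℝ` is endowed with any locally convex (vector space) topology `t`, and the
evaluation map `ev (x, x*) = x* x` is jointly continuous, then `E` admits a bounded
neighbourhood of zero (i.e. the topology of `E` is normable). -/
theorem evaluation_jointly_continuous_implies_normable
    {E : Type*} [AddCommGroup E] [Module ℝ E] [TopologicalSpace E]
    [IsTopologicalAddGroup E] [ContinuousSMul ℝ E] [LocallyConvexSpace ℝ E]
    (t : TopologicalSpace (E →L[ℝ] ℝ))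
    (ht1 : @IsTopologicalAddGroup (E →L[ℝ] ℝ) t _)
    (ht2 : @ContinuousSMul ℝ (E →L[ℝ] ℝ) _ _ t)
    (ht3 : @LocallyConvexSpace ℝ (E →L[ℝ] ℝ) _ _ _ _ t)
    (hev : @Continuous (E × (E →L[ℝ] ℝ)) ℝ
      (@instTopologicalSpaceProd E (E →L[ℝ] ℝ) _ t) _
      (fun p => p.2 p.1)) :
    ∃ U ∈ nhds (0 : E), Bornology.IsVonNBounded ℝ U :=
  evaluation_jointly_continuous_implies_normable_general t ht2 hev
end

section
/- Let E be a group with operation ∘, having at least two elements. Extend ∘ to the set Fil(E) of filters on E by 𝓕 ∘ 𝓖 = the filter generated by {F ∘ G | F ∈ 𝓕, G ∈ 𝓖}, where F ∘ G = {x ∘ y | x ∈ F, y ∈ G}. Then (Fil(E), ∘) is not a group. -/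
open Pointwise

/-- Let `E` be a group with at least two elements, and extend the group operation to
proper filters on `E` pointwise (`𝓕 * 𝓖` is the filter generated by the sets `F * G`
for `F ∈ 𝓕`, `G ∈ 𝓖`, which is Mathlib's pointwise product of filters).  Then the set
of proper filters with this operation is not a group: there is no identity filter `e`
together with inverses for every proper filter. -/
theorem filters_with_pointwise_mul_not_a_group
    {E : Type*} [Group E] [Nontrivial E] :
    ¬ ∃ e : Filter E, e.NeBot ∧
        (∀ F : Filter E, F.NeBot → e * F = F ∧ F * e = F) ∧
        (∀ F : Filter E, F.NeBot → ∃ G : Filter E, G.NeBot ∧ G * F = e ∧ F * G = e) := by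
  rintro ⟨e, he, hid, hinv⟩
  -- The identity must be `pure 1`.
  have h1 : e = pure 1 := by
    have h := (hid (pure 1) (Filter.pure_neBot)).2
    rw [Filter.pure_mul] at h
    simpa using h
  -- The top filter has an inverse `G` with `G * ⊤ = e`.
  obtain ⟨G, hG, hG1, -⟩ := hinv ⊤ ⟨top_ne_bot⟩
  have htop : G * ⊤ = ⊤ := by
    refine top_le_iff.1 fun s hs => ?_
    rw [Filter.mem_mul] at hs
    obtain ⟨t, ht, u, hu, hsub⟩ := hs
    have htne : t.Nonempty := Filter.nonempty_of_mem ht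
    have : (Set.univ : Set E) ⊆ s := by
      calc (Set.univ : Set E) = t * Set.univ := (Set.mul_univ htne).symm
        _ ⊆ t * u := Set.mul_subset_mul_left (by rw [Filter.mem_top.1 hu])
        _ ⊆ s := hsub
    rw [Set.univ_subset_iff] at this
    exact Filter.mem_top.2 this
  rw [htop, h1] at hG1
  obtain ⟨y, hy⟩ := exists_ne (1 : E)
  have : ({1} : Set E) ∈ (⊤ : Filter E) := hG1 ▸ Filter.mem_pure.2 rfl
  rw [Filter.mem_top] at this
  exact hy (Set.eq_univ_iff_forall.1 this y)
end

section
/- Let σ = (E, E', T, Ξ) be a TTS and ≤ a preorder on E' such that σ and (E', ≤) are strongly compatible, i.e.: (3.1) x' ∈ T(A), x' ≤ y' implies y' ∈ T(A); (3.2) x' ∈ Conver(σ, x), x' ≤ y' implies y' ∈ Conver(σ, x); (3.3) x' ∈ Cauchy(σ), x' ≤ y' implies y' ∈ Cauchy(σ) and x' Ξ y'; and (3.20) for all A, B ⊆ E, T(A ∪ B) ⊆ T_σ(A, A∪B) ∪ T_σ(B, A∪B), where T_σ(A, C) = {x' ∈ T(C) | ∃ y' ∈ T(A), x' ≤ y'}.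 Then finite unions of σ-closed sets are σ-closed, and finite intersections of σ-open sets are σ-open. -/
/-- The set of processes convergent to `x` in the topological type structure given by
`T` and the Cauchy-ness relation `Xi`. -/
def ConverTTS {E E' : Type*} (T : Set E → Set E') (Xi : E' → E' → Prop) (x : E) : Set E' :=
  {x' | ∃ x'0 ∈ T {x}, Xi x' x'0}

/-- The set of Cauchy processes of the topological type structure with relation `Xi`. -/
def CauchyTTS {E' : Type*} (Xi : E' → E' → Prop) : Set E' :=
  {x' | Xi x' x'}

/-- A subset `A ⊆ E` is `σ`-closed if every process based in `A` which converges in `σ`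
to some `x ∈ E` has `x ∈ A`. -/
def IsClosedTTS {E E' : Type*} (T : Set E → Set E') (Xi : E' → E' → Prop) (A : Set E) : Prop :=
  ∀ x' ∈ T A, ∀ x : E, x' ∈ ConverTTS T Xi x → x ∈ A

/-- A subset `A ⊆ E` is `σ`-open if its complement is `σ`-closed. -/
def IsOpenTTS {E E' : Type*} (T : Set E → Set E') (Xi : E' → E' → Prop) (A : Set E) : Prop :=
  IsClosedTTS T Xi Aᶜ

/-- The `σ`-adherence operator (3.19): `T_σ(A, C)` consists of the processes based in `C`
which are refined by some process based in `A`. -/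
def TsigmaTTS {E E' : Type*} (T : Set E → Set E') (le : E' → E' → Prop)
    (A C : Set E) : Set E' :=
  {x' ∈ T C | ∃ y' ∈ T A, le x' y'}

/-! Convergence is inherited upwards along `≤` (3.2), so by (3.20) a process based in `A ∪ B`
that converges to `x` is refined by a process converging to `x` that is based in `A` or in `B`;
hence the union of two `σ`-closed sets is `σ`-closed. Induction on finite sets and de Morgan
give the rest. -/

section StronglyCompatible

variable {E E' : Type*} {T : Set E → Set E'} {Xi : E' → E' → Prop} {le : E' → E' → Prop}

theorem isClosedTTS_empty (hT0 : T (∅ : Set E) = ∅) : IsClosedTTS T Xi ∅ := by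
  intro x' hx'
  simp [hT0] at hx'

theorem IsClosedTTS.mem_of_mem_tsigmaTTS
    (h32 : ∀ (x : E) (x' y' : E'), x' ∈ ConverTTS T Xi x → le x' y' → y' ∈ ConverTTS T Xi x)
    {A C : Set E} (hA : IsClosedTTS T Xi A) {x' : E'} (hx' : x' ∈ TsigmaTTS T le A C)
    {x : E} (hconv : x' ∈ ConverTTS T Xi x) : x ∈ A := by
  obtain ⟨-, y', hy', hle⟩ := hx'
  exact hA y' hy' x (h32 x x' y' hconv hle)

theorem IsClosedTTS.union
    (h32 : ∀ (x : E) (x' y' : E'), x' ∈ ConverTTS T Xi x → le x' y' → y' ∈ ConverTTS T Xi x)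
    {A B : Set E} (h320 : T (A ∪ B) ⊆ TsigmaTTS T le A (A ∪ B) ∪ TsigmaTTS T le B (A ∪ B))
    (hA : IsClosedTTS T Xi A) (hB : IsClosedTTS T Xi B) : IsClosedTTS T Xi (A ∪ B) := by
  intro x' hx' x hconv
  rcases h320 hx' with hxA | hxB
  · exact Or.inl (hA.mem_of_mem_tsigmaTTS h32 hxA hconv)
  · exact Or.inr (hB.mem_of_mem_tsigmaTTS h32 hxB hconv)

variable (hT0 : T (∅ : Set E) = ∅)
  (h32 : ∀ (x : E) (x' y' : E'), x' ∈ ConverTTS T Xi x → le x' y' → y' ∈ ConverTTS T Xi x)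
  (h320 : ∀ A B : Set E, T (A ∪ B) ⊆ TsigmaTTS T le A (A ∪ B) ∪ TsigmaTTS T le B (A ∪ B))
include hT0 h32 h320

theorem isClosedTTS_sUnion_of_finite {S : Set (Set E)} (hS : S.Finite)
    (hclosed : ∀ A ∈ S, IsClosedTTS T Xi A) : IsClosedTTS T Xi (⋃₀ S) := by
  induction S, hS using Set.Finite.induction_on with
  | empty => simpa using isClosedTTS_empty hT0
  | @insert A S _ _ ih =>
    rw [Set.sUnion_insert]
    exact (hclosed A (Set.mem_insert A S)).union h32 (h320 A (⋃₀ S))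
      (ih fun B hB => hclosed B (Set.mem_insert_of_mem A hB))

theorem isOpenTTS_sInter_of_finite {S : Set (Set E)} (hS : S.Finite)
    (hopen : ∀ A ∈ S, IsOpenTTS T Xi A) : IsOpenTTS T Xi (⋂₀ S) := by
  rw [IsOpenTTS, Set.compl_sInter]
  refine isClosedTTS_sUnion_of_finite hT0 h32 h320 (hS.image _) ?_
  rintro _ ⟨A, hA, rfl⟩
  exact hopen A hA

end StronglyCompatible

theorem tts_strongly_compatible_finite_unions_closed_general
    {E E' : Type*} (T : Set E → Set E') (Xi : E' → E' → Prop) (le : E' → E' → Prop)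
    (hT0 : T (∅ : Set E) = ∅)
    (h32 : ∀ (x : E) (x' y' : E'),
      x' ∈ ConverTTS T Xi x → le x' y' → y' ∈ ConverTTS T Xi x)
    (h320 : ∀ A B : Set E,
      T (A ∪ B) ⊆ TsigmaTTS T le A (A ∪ B) ∪ TsigmaTTS T le B (A ∪ B)) :
    (∀ S : Set (Set E), S.Finite → (∀ A ∈ S, IsClosedTTS T Xi A) →
        IsClosedTTS T Xi (⋃₀ S)) ∧
    (∀ S : Set (Set E), S.Finite → (∀ A ∈ S, IsOpenTTS T Xi A) →
        IsOpenTTS T Xi (⋂₀ S)) :=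
  ⟨fun _ hS => isClosedTTS_sUnion_of_finite hT0 h32 h320 hS,
    fun _ hS => isOpenTTS_sInter_of_finite hT0 h32 h320 hS⟩

/-- If the TTS `σ = (E, E', T, Ξ)` and the preorder `(E', ≤)` are strongly compatible
(conditions (3.1)-(3.3) and (3.20)), then finite unions of `σ`-closed sets are
`σ`-closed and finite intersections of `σ`-open sets are `σ`-open. -/
theorem tts_strongly_compatible_finite_unions_closed
    {E E' : Type*} (T : Set E → Set E') (Xi : E' → E' → Prop) (le : E' → E' → Prop)
    (hrefl : ∀ x' : E', le x' x')
    (htrans : ∀ x' y' z' : E', le x' y' → le y' z' → le x' z')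
    (hTTP1 : ∀ A B : Set E, A.Nonempty → A ⊆ B → (T A).Nonempty ∧ T A ⊆ T B)
    (hTTP2 : T Set.univ = Set.univ)
    (hT0 : T (∅ : Set E) = ∅)
    (hTTS1 : ∀ (x : E) (x' y' : E'), x' ∈ T {x} → y' ∈ T {x} → Xi x' y')
    (hTTS2 : ∀ x' y' : E', Xi x' y' → Xi y' x')
    (hTTS3 : ∀ x' y' : E', Xi x' y' → Xi x' x')
    (h31 : ∀ (A : Set E) (x' y' : E'), x' ∈ T A → le x' y' → y' ∈ T A)
    (h32 : ∀ (x : E) (x' y' : E'),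
      x' ∈ ConverTTS T Xi x → le x' y' → y' ∈ ConverTTS T Xi x)
    (h33 : ∀ x' y' : E', x' ∈ CauchyTTS Xi → le x' y' →
      y' ∈ CauchyTTS Xi ∧ Xi x' y')
    (h320 : ∀ A B : Set E,
      T (A ∪ B) ⊆ TsigmaTTS T le A (A ∪ B) ∪ TsigmaTTS T le B (A ∪ B)) :
    (∀ S : Set (Set E), S.Finite → (∀ A ∈ S, IsClosedTTS T Xi A) →
        IsClosedTTS T Xi (⋃₀ S)) ∧
    (∀ S : Set (Set E), S.Finite → (∀ A ∈ S, IsOpenTTS T Xi A) →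
        IsOpenTTS T Xi (⋂₀ S)) :=
  tts_strongly_compatible_finite_unions_closed_general T Xi le hT0 h32 h320
end

section
/- Let σ = (E, E', T, Ξ) be a TTS strongly compatible with a preorder (E', ≤). Then for every x ∈ E and x' ∈ E': if x' ∈ Conver(σ, x), then for every σ-neighbourhood A ∈ 𝒱_σ(x) there exists y' ∈ Conver(σ, x) ∩ T(A) with x' ≤ y'. -/
/-- The `σ`-neighbourhoods of a point `x`. -/
def nbhdTTS {E E' : Type*} (T : Set E → Set E') (Xi : E' → E' → Prop) (x : E) : Set (Set E) :=
  {A : Set E | ∃ B : Set E, IsOpenTTS T Xi B ∧ x ∈ B ∧ B ⊆ A}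

/-- (3.23): If the TTS `σ = (E, E', T, Ξ)` and the preorder `(E', ≤)` are strongly
compatible, then for every `x ∈ E` and every process `x'` convergent to `x`, each
`σ`-neighbourhood `A` of `x` contains a refinement `y' ≥ x'` which is based in `A` and
converges to `x`. -/
theorem tts_strongly_compatible_convergent_refinement
    {E E' : Type*} (T : Set E → Set E') (Xi : E' → E' → Prop) (le : E' → E' → Prop)
    (hrefl : ∀ x' : E', le x' x')
    (htrans : ∀ x' y' z' : E', le x' y' → le y' z' → le x' z')
    (hTTP1 : ∀ A B : Set E, A.Nonempty → A ⊆ B → (T A).Nonempty ∧ T A ⊆ T B)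
    (hTTP2 : T Set.univ = Set.univ)
    (hT0 : T (∅ : Set E) = ∅)
    (hTTS1 : ∀ (x : E) (x' y' : E'), x' ∈ T {x} → y' ∈ T {x} → Xi x' y')
    (hTTS2 : ∀ x' y' : E', Xi x' y' → Xi y' x')
    (hTTS3 : ∀ x' y' : E', Xi x' y' → Xi x' x')
    (h31 : ∀ (A : Set E) (x' y' : E'), x' ∈ T A → le x' y' → y' ∈ T A)
    (h32 : ∀ (x : E) (x' y' : E'),
      x' ∈ ConverTTS T Xi x → le x' y' → y' ∈ ConverTTS T Xi x)
    (h33 : ∀ x' y' : E', x' ∈ CauchyTTS Xi → le x' y' →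
      y' ∈ CauchyTTS Xi ∧ Xi x' y')
    (h320 : ∀ A B : Set E,
      T (A ∪ B) ⊆ TsigmaTTS T le A (A ∪ B) ∪ TsigmaTTS T le B (A ∪ B)) :
    ∀ (x : E) (x' : E'), x' ∈ ConverTTS T Xi x →
      ∀ A ∈ nbhdTTS T Xi x,
        ∃ y' ∈ ConverTTS T Xi x ∩ T A, le x' y' := by
  rintro x x' hconv A ⟨B, hBopen, hxB, hBA⟩
  have huniv : (B ∪ Bᶜ : Set E) = Set.univ := Set.union_compl_self B
  have hx'univ : x' ∈ T (B ∪ Bᶜ) := by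
    rw [huniv, hTTP2]; trivial
  rcases h320 B Bᶜ hx'univ with h | h
  · obtain ⟨-, y', hy'B, hle⟩ := h
    refine ⟨y', ⟨h32 x x' y' hconv hle, ?_⟩, hle⟩
    exact (hTTP1 B A ⟨x, hxB⟩ hBA).2 hy'B
  · obtain ⟨-, y', hy'Bc, hle⟩ := h
    exact absurd (hBopen y' hy'Bc x (h32 x x' y' hconv hle)) (by simpa using hxB)
end

section
/- Let σ = (E, E', T, Ξ) be a TTS strongly compatible with a preorder (E', ≤). Then the σ-open sets form a topology on E in the usual sense: ∅ and E are σ-open, arbitrary unions of σ-open sets are σ-open, and finite intersections of σ-open sets are σ-open. -/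
/-- If the TTS `σ = (E, E', T, Ξ)` and the preorder `(E', ≤)` are strongly compatible,
then the `σ`-open sets form a usual (HKB) topology on `E`: there is a topology on `E`
whose open sets are exactly the `σ`-open sets. -/
theorem tts_strongly_compatible_gives_topology
    {E E' : Type*} (T : Set E → Set E') (Xi : E' → E' → Prop) (le : E' → E' → Prop)
    (hrefl : ∀ x' : E', le x' x')
    (htrans : ∀ x' y' z' : E', le x' y' → le y' z' → le x' z')
    (hTTP1 : ∀ A B : Set E, A.Nonempty → A ⊆ B → (T A).Nonempty ∧ T A ⊆ T B)
    (hTTP2 : T Set.univ = Set.univ)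
    (hT0 : T (∅ : Set E) = ∅)
    (hTTS1 : ∀ (x : E) (x' y' : E'), x' ∈ T {x} → y' ∈ T {x} → Xi x' y')
    (hTTS2 : ∀ x' y' : E', Xi x' y' → Xi y' x')
    (hTTS3 : ∀ x' y' : E', Xi x' y' → Xi x' x')
    (h31 : ∀ (A : Set E) (x' y' : E'), x' ∈ T A → le x' y' → y' ∈ T A)
    (h32 : ∀ (x : E) (x' y' : E'),
      x' ∈ ConverTTS T Xi x → le x' y' → y' ∈ ConverTTS T Xi x)
    (h33 : ∀ x' y' : E', x' ∈ CauchyTTS Xi → le x' y' →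
      y' ∈ CauchyTTS Xi ∧ Xi x' y')
    (h320 : ∀ A B : Set E,
      T (A ∪ B) ⊆ TsigmaTTS T le A (A ∪ B) ∪ TsigmaTTS T le B (A ∪ B)) :
    ∃ t : TopologicalSpace E, ∀ A : Set E, t.IsOpen A ↔ IsOpenTTS T Xi A := by
  refine ⟨⟨IsOpenTTS T Xi, ?_, ?_, ?_⟩, fun A => Iff.rfl⟩
  · -- univ is open
    intro x' hx' x _
    simp [hT0] at hx'
  · -- intersection of two opens
    intro A B hA hB x' hx' x hconv hx
    have hx' : x' ∈ T (Aᶜ ∪ Bᶜ) := by rwa [Set.compl_inter] at hx'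
    rcases h320 Aᶜ Bᶜ hx' with h | h
    · rcases h.2 with ⟨y', hy', hle⟩
      exact hA y' hy' x (h32 x x' y' hconv hle) hx.1
    · rcases h.2 with ⟨y', hy', hle⟩
      exact hB y' hy' x (h32 x x' y' hconv hle) hx.2
  · -- arbitrary unions
    intro S hS x' hx' x hconv
    rw [Set.compl_sUnion] at hx'
    by_cases hne : (⋂₀ (compl '' S)).Nonempty
    · intro hx
      rcases hx with ⟨A, hA, hxA⟩
      have hsub : ⋂₀ (compl '' S) ⊆ Aᶜ :=
        Set.sInter_subset_of_mem ⟨A, hA, rfl⟩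
      have := (hTTP1 _ _ hne hsub).2 hx'
      exact hS A hA x' this x hconv hxA
    · rw [Set.not_nonempty_iff_eq_empty] at hne
      rw [hne, hT0] at hx'
      exact absurd hx' (Set.notMem_empty x')
end

section
/- Let σ = (E, E', T, Ξ) be any topological type structure. Define E'_P = 𝒫(E'), the preorder x'_P ≤_P y'_P iff x'_P ⊇ y'_P, the map T_P(A) = 𝒫(T(A)), and the relation (x'_P, y'_P) ∈ Ξ_P iff for all x', y' ∈ x'_P ∪ y'_P one has (x', y') ∈ Ξ. Then σ_P = (E, E'_P, T_P, Ξ_P) is a topological type structure, and σ_P is compatible with (E'_P, ≤_P), i.e., conditions (3.1)-(3.3) hold for σ_P and ≤_P. -/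
/-- The powerset map `T_P` of (3.28). -/
def TP {E E' : Type*} (T : Set E → Set E') (A : Set E) : Set (Set E') :=
  {S : Set E' | S ⊆ T A}

/-- The relation `Ξ_P` of (3.29). -/
def XiP {E' : Type*} (Xi : E' → E' → Prop) (X Y : Set E') : Prop :=
  ∀ x' ∈ X ∪ Y, ∀ y' ∈ X ∪ Y, Xi x' y'

/-- The partial order `≤_P` of (3.26): reverse inclusion. -/
def leP {E' : Type*} (X Y : Set E') : Prop := Y ⊆ X

/-- The first association of pre-ordered TTP-s (Rosinger [7, p. 148]): for any TTS
`σ = (E, E', T, Ξ)`, the quadruplet `σ_P = (E, 𝒫(E'), T_P, Ξ_P)` is again a TTS, and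
`σ_P` is compatible with the preorder `≤_P`, i.e. conditions (3.1)-(3.3) hold. -/
theorem tts_powerset_association_compatible
    {E E' : Type*} (T : Set E → Set E') (Xi : E' → E' → Prop)
    (hTTP1 : ∀ A B : Set E, A.Nonempty → A ⊆ B → (T A).Nonempty ∧ T A ⊆ T B)
    (hTTP2 : T Set.univ = Set.univ)
    (hTTS1 : ∀ (x : E) (x' y' : E'), x' ∈ T {x} → y' ∈ T {x} → Xi x' y')
    (hTTS2 : ∀ x' y' : E', Xi x' y' → Xi y' x')
    (hTTS3 : ∀ x' y' : E', Xi x' y' → Xi x' x') :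
    -- σ_P is a topological type structure:
    (∀ A B : Set E, A.Nonempty → A ⊆ B → (TP T A).Nonempty ∧ TP T A ⊆ TP T B) ∧
    TP T (Set.univ : Set E) = Set.univ ∧
    (∀ (x : E) (X Y : Set E'), X ∈ TP T {x} → Y ∈ TP T {x} → XiP Xi X Y) ∧
    (∀ X Y : Set E', XiP Xi X Y → XiP Xi Y X) ∧
    (∀ X Y : Set E', XiP Xi X Y → XiP Xi X X) ∧
    -- compatibility (3.1)-(3.3) of σ_P with ≤_P:
    (∀ (A : Set E) (X Y : Set E'), X ∈ TP T A → leP X Y → Y ∈ TP T A) ∧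
    (∀ (x : E) (X Y : Set E'),
      X ∈ ConverTTS (TP T) (XiP Xi) x → leP X Y → Y ∈ ConverTTS (TP T) (XiP Xi) x) ∧
    (∀ X Y : Set E', X ∈ CauchyTTS (XiP Xi) → leP X Y →
      Y ∈ CauchyTTS (XiP Xi) ∧ XiP Xi X Y) := by
  refine ⟨?_, ?_, ?_, ?_, ?_, ?_, ?_, ?_⟩
  · intro A B hA hAB
    refine ⟨⟨∅, by simp [TP]⟩, fun S hS => ?_⟩
    exact hS.trans (hTTP1 A B hA hAB).2
  · ext S; simp [TP, hTTP2]
  · intro x X Y hX hY z hz w hw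
    have hz' : z ∈ T {x} := by rcases hz with h | h; exacts [hX h, hY h]
    have hw' : w ∈ T {x} := by rcases hw with h | h; exacts [hX h, hY h]
    exact hTTS1 x z w hz' hw'
  · intro X Y h z hz w hw
    exact h z (Set.union_comm X Y ▸ hz) w (Set.union_comm X Y ▸ hw)
  · intro X Y h z hz w hw
    have hz' : z ∈ X ∪ Y := Or.inl (by simpa using hz)
    have hw' : w ∈ X ∪ Y := Or.inl (by simpa using hw)
    exact h z hz' w hw'
  · intro A X Y hX hXY
    exact hXY.trans hX
  · rintro x X Y ⟨X0, hX0, hXi⟩ hXY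
    refine ⟨X0, hX0, fun z hz w hw => ?_⟩
    have hz' : z ∈ X ∪ X0 := by rcases hz with h | h; exacts [Or.inl (hXY h), Or.inr h]
    have hw' : w ∈ X ∪ X0 := by rcases hw with h | h; exacts [Or.inl (hXY h), Or.inr h]
    exact hXi z hz' w hw'
  · intro X Y hX hXY
    have key : ∀ z ∈ X ∪ Y, z ∈ X ∪ X := fun z hz => by
      rcases hz with h | h; exacts [Or.inl h, Or.inl (hXY h)]
    constructor
    · intro z hz w hw
      exact hX z (key z (Or.inl (hXY (by simpa using hz)))) w (key w (Or.inl (hXY (by simpa using hw))))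
    · intro z hz w hw
      exact hX z (key z hz) w (key w hw)
end

section
/- Let (E, 𝐔) be a uniform convergence space in the sense of Beattie–Butzmann: 𝐔 ⊆ Fil(E × E) satisfies (i) 𝓤_{(x,x)} ∈ 𝐔 for all x ∈ E; (ii) 𝓤, 𝓥 ∈ 𝐔 implies 𝓤 ∩ 𝓥 ∈ 𝐔; (iii) 𝓤 ∈ 𝐔, 𝓥 ⊇ 𝓤 implies 𝓥 ∈ 𝐔; (iv) 𝓤 ∈ 𝐔 implies 𝓤⁻¹ ∈ 𝐔; (v) 𝓤, 𝓥 ∈ 𝐔 and 𝓤 ∘ 𝓥 a proper filter imply 𝓤 ∘ 𝓥 ∈ 𝐔. Define E' = Fil(E), T(A) = {𝓕 | A ∈ 𝓕} for nonempty A, and 𝓕 Ξ_𝐔 𝓖 iff 𝓕 × 𝓖 ∈ 𝐔, where 𝓕 × 𝓖 is the product filter on E × E. Then σ_𝐔 = (E, E', T, Ξ_𝐔) is a topological type structure, i.e., satisfies (TTP1), (TTP2), (TTS1), (TTS2), (TTS3). -/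
open Filter

/-- The set (type) of proper filters on `E`. -/
def Fil (E : Type*) := {F : Filter E // F.NeBot}

/-- The topological support mapping: `T A` consists of the proper filters containing
`A` (so `T ∅ = ∅`). -/
def filT {E : Type*} (A : Set E) : Set (Fil E) := {F | A ∈ F.1}

/-- The inverse `𝓤⁻¹` of a filter on `E × E`. -/
def filterInv {E : Type*} (V : Filter (E × E)) : Filter (E × E) :=
  Filter.map Prod.swap V

/-- The composition `𝓤 ∘ 𝓥` of two filters on `E × E`: the filter generated by the
relational composites `A ○ B` with `A ∈ 𝓤`, `B ∈ 𝓥`. -/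
def filterComp {E : Type*} (V W : Filter (E × E)) : Filter (E × E) :=
  V.lift fun A => W.lift' fun B => SetRel.comp A B

/-- Given a Beattie–Butzmann uniform convergence structure `U` on `E`, the Cauchy-ness
relation `Ξ_U` of (4.14): `𝓕 Ξ_U 𝓖` iff the product filter `𝓕 × 𝓖` belongs to `U`. -/
def XiU {E : Type*} (U : Set (Filter (E × E))) (F G : Fil E) : Prop :=
  F.1 ×ˢ G.1 ∈ U

section FilterOperations

variable {E : Type*}

lemma filT_nonempty {A : Set E} (hA : A.Nonempty) : (filT A).Nonempty :=
  ⟨⟨𝓟 A, principal_neBot_iff.2 hA⟩, mem_principal_self A⟩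

lemma filT_mono : Monotone (filT : Set E → Set (Fil E)) :=
  fun _ _ hAB _ hF => mem_of_superset hF hAB

lemma filT_univ : filT (Set.univ : Set E) = Set.univ :=
  Set.eq_univ_of_forall fun _ => univ_mem

lemma filterInv_prod (F G : Filter E) : filterInv (F ×ˢ G) = G ×ˢ F :=
  prod_comm.symm

lemma prod_le_filterComp_prod {F G H : Filter E} [G.NeBot] :
    F ×ˢ H ≤ filterComp (F ×ˢ G) (G ×ˢ H) := by
  refine le_lift.2 fun A hA => le_lift'.2 fun B hB => ?_
  obtain ⟨s, hs, t₁, ht₁, hA⟩ := mem_prod_iff.1 hA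
  obtain ⟨t₂, ht₂, u, hu, hB⟩ := mem_prod_iff.1 hB
  have hcomp : SetRel.comp (s ×ˢ t₁) (t₂ ×ˢ u) = s ×ˢ u :=
    SetRel.prod_comp_prod_of_inter_nonempty (nonempty_of_mem (inter_mem ht₁ ht₂)) s u
  exact mem_of_superset (prod_mem_prod hs hu) (hcomp ▸ SetRel.comp_subset_comp hA hB)

lemma Fil.prod_neBot (F G : Fil E) : (F.1 ×ˢ G.1).NeBot :=
  Filter.prod_neBot.2 ⟨F.2, G.2⟩

end FilterOperations

namespace XiU

variable {E : Type*} {U : Set (Filter (E × E))}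

lemma symm (hinv : ∀ V ∈ U, filterInv V ∈ U) {F G : Fil E} (h : XiU U F G) :
    XiU U G F := by
  simpa only [XiU, filterInv_prod] using hinv _ h

lemma of_mem_filT_singleton (hdiag : ∀ x : E, pure (x, x) ∈ U)
    (hsub : ∀ V W : Filter (E × E), V ∈ U → W ≤ V → W.NeBot → W ∈ U)
    {x : E} {F G : Fil E} (hF : F ∈ filT {x}) (hG : G ∈ filT {x}) : XiU U F G := by
  have hle : F.1 ×ˢ G.1 ≤ pure (x, x) := by
    rw [← prod_pure_pure]
    exact prod_mono (le_pure_iff.2 hF) (le_pure_iff.2 hG)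
  exact hsub _ _ (hdiag x) hle (F.prod_neBot G)

lemma left_self (hsub : ∀ V W : Filter (E × E), V ∈ U → W ≤ V → W.NeBot → W ∈ U)
    (hinv : ∀ V ∈ U, filterInv V ∈ U)
    (hcomp : ∀ V W : Filter (E × E), V ∈ U → W ∈ U →
      (filterComp V W).NeBot → filterComp V W ∈ U)
    {F G : Fil E} (h : XiU U F G) : XiU U F F := by
  have := G.2
  have hle : F.1 ×ˢ F.1 ≤ filterComp (F.1 ×ˢ G.1) (G.1 ×ˢ F.1) := prod_le_filterComp_prod
  have hne : (filterComp (F.1 ×ˢ G.1) (G.1 ×ˢ F.1)).NeBot :=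
    (F.prod_neBot F).mono hle
  exact hsub _ _ (hcomp _ _ h (h.symm hinv) hne) hle (F.prod_neBot F)

end XiU

theorem uniform_convergence_space_gives_tts_general
    {E : Type*} (U : Set (Filter (E × E)))
    (h48 : ∀ x : E, pure (x, x) ∈ U)
    (h410 : ∀ V W : Filter (E × E), V ∈ U → W ≤ V → W.NeBot → W ∈ U)
    (h411 : ∀ V ∈ U, filterInv V ∈ U)
    (h412 : ∀ V W : Filter (E × E), V ∈ U → W ∈ U →
      (filterComp V W).NeBot → filterComp V W ∈ U) :
    (∀ A B : Set E, A.Nonempty → A ⊆ B → (filT A).Nonempty ∧ filT A ⊆ filT B) ∧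
    filT (Set.univ : Set E) = Set.univ ∧
    (∀ (x : E) (F G : Fil E), F ∈ filT {x} → G ∈ filT {x} → XiU U F G) ∧
    (∀ F G : Fil E, XiU U F G → XiU U G F) ∧
    (∀ F G : Fil E, XiU U F G → XiU U F F) :=
  ⟨fun _ _ hA hAB => ⟨filT_nonempty hA, filT_mono hAB⟩,
    filT_univ,
    fun _ _ _ => XiU.of_mem_filT_singleton h48 h410,
    fun _ _ => XiU.symm h411,
    fun _ _ => XiU.left_self h410 h411 h412⟩

/-- If `(E, U)` is a uniform convergence space in the sense of Beattie–Butzmann —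
`U` is a set of proper filters on `E × E` satisfying (4.8)-(4.12) — then
`σ_U = (E, Fil(E), T, Ξ_U)` is a topological type structure, i.e. it satisfies
(TTP1), (TTP2), (TTS1), (TTS2) and (TTS3). -/
theorem uniform_convergence_space_gives_tts
    {E : Type*} (U : Set (Filter (E × E)))
    (hproper : ∀ V ∈ U, Filter.NeBot V)
    (h48 : ∀ x : E, pure (x, x) ∈ U)
    (h49 : ∀ V W : Filter (E × E), V ∈ U → W ∈ U → V ⊔ W ∈ U)
    (h410 : ∀ V W : Filter (E × E), V ∈ U → W ≤ V → W.NeBot → W ∈ U)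
    (h411 : ∀ V ∈ U, filterInv V ∈ U)
    (h412 : ∀ V W : Filter (E × E), V ∈ U → W ∈ U →
      (filterComp V W).NeBot → filterComp V W ∈ U) :
    (∀ A B : Set E, A.Nonempty → A ⊆ B → (filT A).Nonempty ∧ filT A ⊆ filT B) ∧
    filT (Set.univ : Set E) = Set.univ ∧
    (∀ (x : E) (F G : Fil E), F ∈ filT {x} → G ∈ filT {x} → XiU U F G) ∧
    (∀ F G : Fil E, XiU U F G → XiU U G F) ∧
    (∀ F G : Fil E, XiU U F G → XiU U F F) :=
  uniform_convergence_space_gives_tts_general U h48 h410 h411 h412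
end
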